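/- Let l ∈ {K4, KD4, S4}, let φ be a modal formula, and let a, b, c be maximal states for l with respect to φ. If B(a) = B(b), D(a) = D(b), th(a) → ◇th(c) is valid for l, and th(b) → ◇th(c) is not valid for l, then c = a, a ≠ b, and l = S4. -/

import Mathlib

/-- Modal formulas in negation normal form, as in the paper:
φ ::= ⊥ | ⊤ | p | ¬p | φ∧φ | φ∨φ | □φ | ◇φ. -/
inductive Form : Type where
  | bot : Form
  | top : Form
  | pos : ℕ → Form
  | npos : ℕ → Form
  | and : Form → Form → Form
  | or : Form → Form → Form
  | box : Form → Form
  | dia : Form → Form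
deriving DecidableEq

namespace Form

/-- Negation, defined as usual (by De Morgan dualities). -/
def neg : Form → Form
  | bot => top
  | top => bot
  | pos p => npos p
  | npos p => pos p
  | and φ ψ => or φ.neg ψ.neg
  | or φ ψ => and φ.neg ψ.neg
  | box φ => dia φ.neg
  | dia φ => box φ.neg

/-- Implication φ → ψ, defined as usual. -/
def imp (φ ψ : Form) : Form := or φ.neg ψ

/-- Bi-implication φ ↔ ψ, defined as usual. -/
def biimp (φ ψ : Form) : Form := and (imp φ ψ) (imp ψ φ)

/-- P(φ): the set of propositional variables occurring in φ. -/
def vars : Form → Finset ℕ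
  | bot => ∅
  | top => ∅
  | pos p => {p}
  | npos p => {p}
  | and φ ψ => φ.vars ∪ ψ.vars
  | or φ ψ => φ.vars ∪ ψ.vars
  | box φ => φ.vars
  | dia φ => φ.vars

/-- Modal depth. -/
def md : Form → ℕ
  | bot => 0
  | top => 0
  | pos _ => 0
  | npos _ => 0
  | and φ ψ => max φ.md ψ.md
  | or φ ψ => max φ.md ψ.md
  | box φ => φ.md + 1
  | dia φ => φ.md + 1

/-- sub(φ): the set of subformulas of φ. -/
def subf : Form → Finset Form
  | bot => {bot}
  | top => {top}
  | pos p => {pos p}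
  | npos p => {npos p}
  | and φ ψ => insert (and φ ψ) (φ.subf ∪ ψ.subf)
  | or φ ψ => insert (or φ ψ) (φ.subf ∪ ψ.subf)
  | box φ => insert (box φ) φ.subf
  | dia φ => insert (dia φ) φ.subf

/-- s̄ub(φ) = sub(φ) ∪ {¬ψ : ψ ∈ sub(φ)}. -/
def subBar (φ : Form) : Finset Form := φ.subf ∪ φ.subf.image neg

/-- □^k φ : k nested boxes. -/
def boxIter : ℕ → Form → Form
  | 0, φ => φ
  | n + 1, φ => box (boxIter n φ)

def isDia : Form → Bool
  | dia _ => true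
  | _ => false

def isBox : Form → Bool
  | box _ => true
  | _ => false

end Form

/-- Big conjunction over a finite set of formulas (⋀∅ = ⊤). -/
noncomputable def bigAnd (s : Finset Form) : Form := s.toList.foldr Form.and Form.top

/-- Big disjunction over a finite set of formulas (⋁∅ = ⊥). -/
noncomputable def bigOr (s : Finset Form) : Form := s.toList.foldr Form.or Form.bot

/-- th(a) = ⋀ a. -/
noncomputable def th (a : Finset Form) : Form := bigAnd a

/-- A finite Kripke model: a nonempty finite set of states, an accessibility
relation and a valuation. -/
structure Model : Type 1 where
  W : Type
  nonempty : Nonempty W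
  finite : Finite W
  R : W → W → Prop
  V : W → Set ℕ

/-- Satisfaction M,w ⊨ φ. -/
def Model.sat (M : Model) : M.W → Form → Prop
  | _, .bot => False
  | _, .top => True
  | w, .pos p => p ∈ M.V w
  | w, .npos p => p ∉ M.V w
  | w, .and φ ψ => M.sat w φ ∧ M.sat w ψ
  | w, .or φ ψ => M.sat w φ ∨ M.sat w ψ
  | w, .box φ => ∀ v, M.R w v → M.sat v φ
  | w, .dia φ => ∃ v, M.R w v ∧ M.sat v φ

/-- The six base logics K, D, T, K4, KD4, S4. -/
inductive BaseLogic : Type where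
  | K | D | T | K4 | KD4 | S4
deriving DecidableEq

/-- A logic: a base logic, possibly extended by axiom 5. -/
structure Logic : Type where
  base : BaseLogic
  has5 : Bool
deriving DecidableEq

def Logic.K : Logic := ⟨.K, false⟩
def Logic.D : Logic := ⟨.D, false⟩
def Logic.T : Logic := ⟨.T, false⟩
def Logic.K4 : Logic := ⟨.K4, false⟩
def Logic.KD4 : Logic := ⟨.KD4, false⟩
def Logic.S4 : Logic := ⟨.S4, false⟩

/-- l + 5. -/
def BaseLogic.plus5 (b : BaseLogic) : Logic := ⟨b, true⟩

/-- M is a model for the logic l (frame conditions). -/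
def Model.IsFor (M : Model) (l : Logic) : Prop :=
  (match l.base with
    | .K => True
    | .D => ∀ w, ∃ v, M.R w v
    | .T => ∀ w, M.R w w
    | .K4 => ∀ a b c, M.R a b → M.R b c → M.R a c
    | .KD4 => (∀ w, ∃ v, M.R w v) ∧ (∀ a b c, M.R a b → M.R b c → M.R a c)
    | .S4 => (∀ w, M.R w w) ∧ (∀ a b c, M.R a b → M.R b c → M.R a c))
  ∧ (l.has5 = true → ∀ a b c, M.R a b → M.R a c → M.R b c)

/-- φ is satisfiable for l: satisfied at some state of some finite model for l. -/
def Satisfiable (l : Logic) (φ : Form) : Prop :=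
  ∃ M : Model, M.IsFor l ∧ ∃ w : M.W, M.sat w φ

/-- φ is valid for l: satisfied at every state of every finite model for l. -/
def Valid (l : Logic) (φ : Form) : Prop :=
  ∀ M : Model, M.IsFor l → ∀ w : M.W, M.sat w φ

/-- φ is complete for l: for every ψ ∈ L(P(φ)), φ→ψ or φ→¬ψ is valid for l. -/
def Complete (l : Logic) (φ : Form) : Prop :=
  ∀ ψ : Form, ψ.vars ⊆ φ.vars → (Valid l (φ.imp ψ) ∨ Valid l (φ.imp ψ.neg))

/-- Z is a bisimulation modulo P from M to M'. -/
def IsBisim (P : Set ℕ) (M M' : Model) (Z : M.W → M'.W → Prop) : Prop :=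
  (∃ s s', Z s s') ∧
  ∀ s s', Z s s' →
    (M.V s ∩ P = M'.V s' ∩ P) ∧
    (∀ t, M.R s t → ∃ t', M'.R s' t' ∧ Z t t') ∧
    (∀ t', M'.R s' t' → ∃ t, M.R s t ∧ Z t t')

/-- (M,a) ∼_P (M',a'). -/
def Bisimilar (P : Set ℕ) (M : Model) (a : M.W) (M' : Model) (a' : M'.W) : Prop :=
  ∃ Z, IsBisim P M M' Z ∧ Z a a'

/-- (M,a) ≡_P (M',a'): the two pointed models satisfy the same formulas of L(P). -/
def EquivP (P : Set ℕ) (M : Model) (a : M.W) (M' : Model) (a' : M'.W) : Prop :=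
  ∀ φ : Form, ↑φ.vars ⊆ P → (M.sat a φ ↔ M'.sat a' φ)

/-- (M,s) is flat (for base logic l, with axiom 5): the carrier is {s}∪W and
R = R1 ∪ R2 with R1 ⊆ {s}×W, R2 an equivalence relation on W, and s ∈ W if
l ∈ {T,S4}. -/
def Flat (l : BaseLogic) (M : Model) (s : M.W) : Prop :=
  ∃ W : Set M.W, (∀ w, w = s ∨ w ∈ W) ∧
    ∃ R1 R2 : M.W → M.W → Prop,
      (∀ x y, M.R x y ↔ (R1 x y ∨ R2 x y)) ∧
      (∀ x y, R1 x y → x = s ∧ y ∈ W) ∧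
      (∀ x y, R2 x y → x ∈ W ∧ y ∈ W) ∧
      (∀ x ∈ W, R2 x x) ∧
      (∀ x y, R2 x y → R2 y x) ∧
      (∀ x y z, R2 x y → R2 y z → R2 x z) ∧
      ((l = .T ∨ l = .S4) → s ∈ W)

/-- A maximal state for l with respect to φ: a maximally l-consistent subset
of s̄ub(φ). -/
def MaxState (l : Logic) (φ : Form) (a : Finset Form) : Prop :=
  a ⊆ φ.subBar ∧ Satisfiable l (th a) ∧ ∀ ψ ∈ φ.subf, ψ ∈ a ∨ ψ.neg ∈ a

/-- D(x) = {◇ψ : ◇ψ ∈ x}. -/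
def DSet (x : Finset Form) : Finset Form := x.filter (fun ψ => ψ.isDia = true)

/-- B(x) = {□ψ : □ψ ∈ x}. -/
def BSet (x : Finset Form) : Finset Form := x.filter (fun ψ => ψ.isBox = true)

/-- A view: a parent-state and a finite set of children-states. -/
structure View : Type where
  parent : Finset Form
  children : Finset (Finset Form)

/-- The view is with respect to φ: all its states are subsets of s̄ub(φ). -/
def View.WF (φ : Form) (S : View) : Prop :=
  S.parent ⊆ φ.subBar ∧ ∀ c ∈ S.children, c ⊆ φ.subBar

/-- A set of formulas is l-closed. -/
def LClosed (l : Logic) (P : Finset ℕ) (s : Finset Form) : Prop :=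
  (∀ φ1 φ2 : Form, Form.and φ1 φ2 ∈ s → φ1 ∈ s ∧ φ2 ∈ s) ∧
  (∀ φ1 φ2 : Form, Form.or φ1 φ2 ∈ s → φ1 ∈ s ∨ φ2 ∈ s) ∧
  ((l.base = .T ∨ l.base = .S4) → ∀ ψ : Form, Form.box ψ ∈ s → ψ ∈ s) ∧
  (∀ p ∈ P, Form.pos p ∈ s ∨ Form.npos p ∈ s)

/-- The view S is l-complete. -/
def ViewLComplete (l : Logic) (P : Finset ℕ) (S : View) : Prop :=
  LClosed l P S.parent ∧
  (∀ c ∈ S.children, LClosed l P c) ∧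
  (∀ ψ : Form, Form.dia ψ ∈ S.parent → ∃ c ∈ S.children, ψ ∈ c) ∧
  (∀ ψ : Form, Form.box ψ ∈ S.parent → ∀ c ∈ S.children, ψ ∈ c) ∧
  ((l.base = .K4 ∨ l.base = .KD4 ∨ l.base = .S4) →
    ∀ ψ : Form, Form.box ψ ∈ S.parent → ∀ c ∈ S.children, Form.box ψ ∈ c) ∧
  (l.base = .KD4 → S.children.Nonempty)

/-- The view S is consistent for l: every one of its states is consistent. -/
def ViewConsistent (l : Logic) (S : View) : Prop :=
  Satisfiable l (th S.parent) ∧ ∀ c ∈ S.children, Satisfiable l (th c)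

/-- d = max{md(th(c')) : c' ∈ C(S)}. -/
noncomputable def childDepth (S : View) : ℕ := S.children.sup (fun c => (th c).md)

/-- A K-maximal child-state: a maximally K-consistent subset of s̄ub_d(φ). -/
def KMaxChild (φ : Form) (d : ℕ) (c : Finset Form) : Prop :=
  c ⊆ φ.subBar.filter (fun ψ => ψ.md ≤ d) ∧
  Satisfiable Logic.K (th c) ∧
  ∀ ψ ∈ φ.subf, ψ.md ≤ d → (ψ ∈ c ∨ ψ.neg ∈ c)

/-- S' completes S (for logic l, with respect to φ). -/
def ViewCompletes (l : Logic) (φ : Form) (S' S : View) : Prop :=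
  ViewLComplete l φ.vars S' ∧
  S.parent ⊆ S'.parent ∧
  (∀ a ∈ S.children, ∃ a' ∈ S'.children, a ⊆ a') ∧
  (l.base = .K → ∀ a' ∈ S'.children, KMaxChild φ (childDepth S') a') ∧
  (l.base ≠ .K → ∀ a' ∈ S'.children, MaxState l φ a')

/-- The depth-0 normal form ⋀_{p∈S} p ∧ ⋀_{p∈P∖S} ¬p. -/
noncomputable def nf0 (P S : Finset ℕ) : Form :=
  Form.and (bigAnd (S.image Form.pos)) (bigAnd ((P \ S).image Form.npos))

/-- Fine's normal forms F_P^d. -/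
noncomputable def NF (P : Finset ℕ) : ℕ → Set Form
  | 0 => { χ | ∃ S ⊆ P, χ = nf0 P S }
  | d + 1 => { χ | ∃ S : Finset Form, ↑S ⊆ NF P d ∧ ∃ S0 ⊆ P,
      χ = Form.and (nf0 P S0)
            (Form.and (bigAnd (S.image Form.dia)) (Form.box (bigOr S))) }

/-- φ is complete up to its depth for l. -/
def CompleteUpToDepth (l : Logic) (φ : Form) : Prop :=
  ∀ ψ : Form, ψ.vars ⊆ φ.vars → ψ.md ≤ φ.md →
    (Valid l (φ.imp ψ) ∨ Valid l (φ.imp ψ.neg))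

/-! Take a model `M, w` of `th b ∧ ¬◇th c` and graft onto it a new root `r` that carries the
valuation of a model `N, u` of `th a`, sees what `w` sees, and sees itself exactly when `l = S4`.
Since `a` and `b` have the same boxes and diamonds, `r` satisfies every formula of `s̄ub(φ)` true
at `u`, hence `th a`, hence `◇th c`. No successor of `w` satisfies `th c`, so `r` must see itself,
which forces `l = S4`, and satisfy `th c`; as `r` satisfies both maximal states, `c = a`. -/

namespace Form

lemma self_mem_subf (φ : Form) : φ ∈ φ.subf := by
  cases φ <;> simp [subf]

lemma subf_subset_of_mem {φ χ : Form} (h : χ ∈ φ.subf) : χ.subf ⊆ φ.subf := by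
  induction φ with
  | and φ₁ φ₂ ih₁ ih₂ | or φ₁ φ₂ ih₁ ih₂ =>
    simp only [subf, Finset.mem_insert, Finset.mem_union] at h
    rcases h with rfl | h | h
    · rfl
    · exact (ih₁ h).trans (by simp [subf, Finset.subset_iff]; tauto)
    · exact (ih₂ h).trans (by simp [subf, Finset.subset_iff]; tauto)
  | box φ ih | dia φ ih =>
    simp only [subf, Finset.mem_insert] at h
    rcases h with rfl | h
    · rfl
    · exact (ih h).trans (Finset.subset_insert _ _)
  | _ => simp only [subf, Finset.mem_singleton] at h; rw [h]

lemma subf_neg (φ : Form) : φ.neg.subf = φ.subf.image neg := by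
  induction φ <;> simp [neg, subf, Finset.image_insert, Finset.image_union, *]

lemma subf_subset_subBar {φ χ : Form} (h : χ ∈ φ.subBar) : χ.subf ⊆ φ.subBar := by
  rcases Finset.mem_union.mp h with h | h
  · exact (subf_subset_of_mem h).trans Finset.subset_union_left
  · obtain ⟨ψ, hψ, rfl⟩ := Finset.mem_image.mp h
    rw [subf_neg]
    exact (Finset.image_subset_image (subf_subset_of_mem hψ)).trans Finset.subset_union_right

end Form

namespace Model

variable (M : Model)

lemma sat_neg (χ : Form) (w : M.W) : M.sat w χ.neg ↔ ¬ M.sat w χ := by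
  induction χ generalizing w <;> simp [Form.neg, sat, *, ← not_and_or]

lemma sat_imp (w : M.W) (φ ψ : Form) : M.sat w (φ.imp ψ) ↔ (M.sat w φ → M.sat w ψ) := by
  rw [Form.imp, sat, sat_neg, imp_iff_not_or]

lemma sat_foldr_and (w : M.W) (L : List Form) :
    M.sat w (L.foldr Form.and Form.top) ↔ ∀ χ ∈ L, M.sat w χ := by
  induction L with
  | nil => simp [sat]
  | cons χ L ih => simp [sat, ih]

lemma sat_th (w : M.W) (a : Finset Form) : M.sat w (th a) ↔ ∀ χ ∈ a, M.sat w χ := by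
  simp [th, bigAnd, sat_foldr_and]

def withRoot (w : M.W) (V₀ : Set ℕ) (loop : Prop) : Model where
  W := Option M.W
  nonempty := ⟨none⟩
  finite := have := M.finite; inferInstance
  R
    | none, none => loop
    | none, some v => M.R w v
    | some _, none => False
    | some v, some v' => M.R v v'
  V x := x.elim V₀ M.V

variable {M} (w : M.W) (V₀ : Set ℕ) (loop : Prop)

@[simp]
lemma withRoot_V_some (v : M.W) : (M.withRoot w V₀ loop).V (some v) = M.V v := rfl

lemma withRoot_R_some_none (v : M.W) : ¬ (M.withRoot w V₀ loop).R (some v) none := nofun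

lemma withRoot_sat_some (χ : Form) (v : M.W) :
    (M.withRoot w V₀ loop).sat (some v) χ ↔ M.sat v χ := by
  induction χ generalizing v with
  | box ψ ih =>
    refine ⟨fun h v' hv' => (ih v').1 (h (some v') hv'), ?_⟩
    rintro h (_ | v') hv'
    exacts [(withRoot_R_some_none w V₀ loop v hv').elim, (ih v').2 (h v' hv')]
  | dia ψ ih =>
    refine ⟨?_, fun ⟨v', hv', h⟩ => ⟨some v', hv', (ih v').2 h⟩⟩
    rintro ⟨_ | v', hv', h⟩
    exacts [(withRoot_R_some_none w V₀ loop v hv').elim, ⟨v', hv', (ih v').1 h⟩]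
  | _ => simp [sat, *]

lemma withRoot_trans (h : ∀ x y z, M.R x y → M.R y z → M.R x z) :
    ∀ x y z, (M.withRoot w V₀ loop).R x y → (M.withRoot w V₀ loop).R y z →
      (M.withRoot w V₀ loop).R x z := by
  rintro (_ | x) (_ | y) (_ | z) <;> simp only [withRoot] <;> tauto

lemma withRoot_serial (h : ∀ x, ∃ y, M.R x y) :
    ∀ x, ∃ y, (M.withRoot w V₀ loop).R x y := by
  rintro (_ | x)
  · obtain ⟨y, hy⟩ := h w; exact ⟨some y, hy⟩
  · obtain ⟨y, hy⟩ := h x; exact ⟨some y, hy⟩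

lemma withRoot_refl (h : ∀ x, M.R x x) (hloop : loop) :
    ∀ x, (M.withRoot w V₀ loop).R x x := by
  rintro (_ | x)
  · exact hloop
  · exact h x

lemma isFor_withRoot {l : Logic} (hl : l = Logic.K4 ∨ l = Logic.KD4 ∨ l = Logic.S4)
    (hM : M.IsFor l) : (M.withRoot w V₀ (l = Logic.S4)).IsFor l := by
  rcases hl with rfl | rfl | rfl
  · exact ⟨withRoot_trans w V₀ _ hM.1, nofun⟩
  · exact ⟨⟨withRoot_serial w V₀ _ hM.1.1, withRoot_trans w V₀ _ hM.1.2⟩, nofun⟩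
  · exact ⟨⟨withRoot_refl w V₀ _ hM.1.1 rfl, withRoot_trans w V₀ _ hM.1.2⟩, nofun⟩

theorem sat_withRoot_of_sat {Γ : Finset Form} (hΓ : ∀ χ ∈ Γ, χ.subf ⊆ Γ)
    {N : Model} {u : N.W} (hloop : loop → N.R u u)
    (hbox : ∀ ψ, Form.box ψ ∈ Γ → N.sat u (Form.box ψ) → M.sat w (Form.box ψ))
    (hdia : ∀ ψ, Form.dia ψ ∈ Γ → N.sat u (Form.dia ψ) → M.sat w (Form.dia ψ))
    (χ : Form) (hχ : χ ∈ Γ) (hu : N.sat u χ) : (M.withRoot w (N.V u) loop).sat none χ := by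
  induction χ with
  | and χ₁ χ₂ ih₁ ih₂ =>
    exact ⟨ih₁ (hΓ _ hχ (by simp [Form.subf, Form.self_mem_subf])) hu.1,
      ih₂ (hΓ _ hχ (by simp [Form.subf, Form.self_mem_subf])) hu.2⟩
  | or χ₁ χ₂ ih₁ ih₂ =>
    rcases hu with hu | hu
    · exact Or.inl (ih₁ (hΓ _ hχ (by simp [Form.subf, Form.self_mem_subf])) hu)
    · exact Or.inr (ih₂ (hΓ _ hχ (by simp [Form.subf, Form.self_mem_subf])) hu)
  | box ψ ih =>
    rintro (_ | v) hv
    · exact ih (hΓ _ hχ (by simp [Form.subf, Form.self_mem_subf])) (hu u (hloop hv))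
    · exact (withRoot_sat_some w _ loop ψ v).mpr (hbox ψ hχ hu v hv)
  | dia ψ ih =>
    obtain ⟨v, hv, hψ⟩ := hdia ψ hχ hu
    exact ⟨some v, hv, (withRoot_sat_some w _ loop ψ v).mpr hψ⟩
  | _ => exact hu

end Model

lemma MaxState.mem_iff_sat {l : Logic} {φ : Form} {a : Finset Form} (ha : MaxState l φ a)
    {M : Model} {w : M.W} (hw : M.sat w (th a)) {χ : Form} (hχ : χ ∈ φ.subBar) :
    χ ∈ a ↔ M.sat w χ := by
  rw [M.sat_th] at hw
  refine ⟨hw χ, fun hχw => ?_⟩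
  rcases Finset.mem_union.mp hχ with hχ | hχ
  · exact (ha.2.2 χ hχ).resolve_right fun h => (M.sat_neg χ w).mp (hw _ h) hχw
  · obtain ⟨ψ, hψ, rfl⟩ := Finset.mem_image.mp hχ
    exact (ha.2.2 ψ hψ).resolve_left fun h => (M.sat_neg ψ w).mp hχw (hw _ h)

lemma MaxState.eq_of_sat {l : Logic} {φ : Form} {a c : Finset Form}
    (ha : MaxState l φ a) (hc : MaxState l φ c) {M : Model} {w : M.W}
    (hwa : M.sat w (th a)) (hwc : M.sat w (th c)) : a = c := by
  ext χ
  constructor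
  · exact fun h => (hc.mem_iff_sat hwc (ha.1 h)).mpr ((ha.mem_iff_sat hwa (ha.1 h)).mp h)
  · exact fun h => (ha.mem_iff_sat hwa (hc.1 h)).mpr ((hc.mem_iff_sat hwc (hc.1 h)).mp h)

lemma MaxState.sat_th_withRoot {l : Logic} {φ : Form} {a : Finset Form} (ha : MaxState l φ a)
    {M : Model} (w : M.W) (loop : Prop) {N : Model} {u : N.W} (hua : N.sat u (th a))
    (hloop : loop → N.R u u)
    (hbox : ∀ ψ, Form.box ψ ∈ a → M.sat w (Form.box ψ))
    (hdia : ∀ ψ, Form.dia ψ ∈ a → M.sat w (Form.dia ψ)) :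
    (M.withRoot w (N.V u) loop).sat none (th a) := by
  refine (Model.sat_th _ _ a).mpr fun χ hχ =>
    Model.sat_withRoot_of_sat w loop (fun _ => Form.subf_subset_subBar) hloop ?_ ?_ χ (ha.1 hχ)
      ((ha.mem_iff_sat hua (ha.1 hχ)).mp hχ)
  · exact fun ψ hψ hu => hbox ψ ((ha.mem_iff_sat hua hψ).mpr hu)
  · exact fun ψ hψ hu => hdia ψ ((ha.mem_iff_sat hua hψ).mpr hu)

lemma box_mem_of_BSet_eq {a b : Finset Form} (h : BSet a = BSet b) {ψ : Form}
    (hψ : Form.box ψ ∈ a) : Form.box ψ ∈ b := by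
  have : Form.box ψ ∈ BSet b := h ▸ Finset.mem_filter.mpr ⟨hψ, rfl⟩
  exact (Finset.mem_filter.mp this).1

lemma dia_mem_of_DSet_eq {a b : Finset Form} (h : DSet a = DSet b) {ψ : Form}
    (hψ : Form.dia ψ ∈ a) : Form.dia ψ ∈ b := by
  have : Form.dia ψ ∈ DSet b := h ▸ Finset.mem_filter.mpr ⟨hψ, rfl⟩
  exact (Finset.mem_filter.mp this).1

theorem stmt11_general (l : Logic) (hl : l = Logic.K4 ∨ l = Logic.KD4 ∨ l = Logic.S4)
    (φ : Form) (a b c : Finset Form)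
    (ha : MaxState l φ a) (hc : MaxState l φ c)
    (hB : BSet a = BSet b) (hD : DSet a = DSet b)
    (h1 : Valid l ((th a).imp (Form.dia (th c))))
    (h2 : ¬ Valid l ((th b).imp (Form.dia (th c)))) :
    c = a ∧ a ≠ b ∧ l = Logic.S4 := by
  have hab : a ≠ b := by rintro rfl; exact h2 h1
  obtain ⟨M, hM, w, hwb, hwc⟩ : ∃ M : Model, M.IsFor l ∧
      ∃ w, M.sat w (th b) ∧ ¬ M.sat w (Form.dia (th c)) := by
    simpa [Valid, Model.sat_imp] using h2
  obtain ⟨N, hN, u, hua⟩ := ha.2.1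
  have hroot : (M.withRoot w (N.V u) (l = Logic.S4)).sat none (th a) :=
    ha.sat_th_withRoot w _ hua (by rintro rfl; exact hN.1.1 u)
      (fun _ h => (M.sat_th w b).mp hwb _ (box_mem_of_BSet_eq hB h))
      (fun _ h => (M.sat_th w b).mp hwb _ (dia_mem_of_DSet_eq hD h))
  obtain ⟨_ | v, hloop, hrc⟩ :=
    (Model.sat_imp _ _ _ _).mp (h1 _ (Model.isFor_withRoot w _ hl hM) none) hroot
  · exact ⟨hc.eq_of_sat ha hrc hroot, hab, hloop⟩
  · exact absurd ⟨v, hloop, (Model.withRoot_sat_some w _ _ _ v).mp hrc⟩ hwc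

/-- for l ∈ {K4,KD4,S4} and maximal states a,b,c with
B(a)=B(b), D(a)=D(b), th(a)→◇th(c) valid and th(b)→◇th(c) not valid,
we get c = a, a ≠ b and l = S4. -/
theorem stmt11 (l : Logic) (hl : l = Logic.K4 ∨ l = Logic.KD4 ∨ l = Logic.S4)
    (φ : Form) (a b c : Finset Form)
    (ha : MaxState l φ a) (hb : MaxState l φ b) (hc : MaxState l φ c)
    (hB : BSet a = BSet b) (hD : DSet a = DSet b)
    (h1 : Valid l ((th a).imp (Form.dia (th c))))
    (h2 : ¬ Valid l ((th b).imp (Form.dia (th c)))) :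
    c = a ∧ a ≠ b ∧ l = Logic.S4 :=
  stmt11_general l hl φ a b c ha hc hB hD h1 h2
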